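/- (Comparison with Anderson's bound.) Let b ∈ ℝ, D⁺ := (−∞, b], and D ⊆ D⁺ nonempty. Let α ∈ (0,1) and let ℓ ∈ [0,1]ⁿ be such that G_{X,ℓ} is an exact (1−α) lower confidence bound for the CDF on D⁺: for every Borel probability measure ν supported on D⁺ with CDF F and X i.i.d. of size n from ν, P( F(t) ≥ G_{X,ℓ}(t) for all t ) ≥ 1 − α, with equality attained for some such ν. Then for every sample x ∈ Dⁿ, using T(y) := m_{D⁺}(y,ℓ) (Anderson's bound b^{α,Anderson}_ℓ(x) = m_{D⁺}(x,ℓ)), one has b^α_{D⁺,T}(x) ≤ b^{α,Anderson}_ℓ(x). -/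

import Mathlib

/-!
Run the coverage hypothesis on the uniform distribution on `[b - 1, b]`, realised as the law of
`b - 1 + U` with `U` uniform on `[0, 1]`. At the `i`-th order statistic of such a sample the CDF
equals `U_{(i)}` while the stairstep is at least `ℓ_{(i)}`, so with probability at least `1 - α`
the sorted weights satisfy `ℓ_{(i)} ≤ U_{(i)}`. The induced mean is antitone in the sorted weights,
hence then `m(z, U) ≤ m(z, ℓ) ≤ m(x, ℓ)` for every `z ∈ S(x)`, i.e. `b(x, U) ≤ m(x, ℓ)`, and the
`(1 - α)`-quantile of `b(x, U)` is at most `m(x, ℓ)`. That quantile is the infimum of a set bounded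
below, since `b(x, U) ≥ m(x, 1)` almost surely.
-/

open MeasureTheory Set

/-- The sorted rearrangement (order statistics) of a finite real vector:
`sortedVec x i` is the (i+1)-st order statistic `x_{(i+1)}` (0-indexed). -/
noncomputable def sortedVec {n : ℕ} (x : Fin n → ℝ) : Fin n → ℝ :=
  x ∘ ⇑(Tuple.sort x)

/-- The induced mean `m(x, ℓ) = s - ∑ ℓ_{(i)} (x_{(i+1)} - x_{(i)})`, with `x_{(n+1)} := s`. -/
noncomputable def inducedMean {n : ℕ} (s : ℝ) (x ℓ : Fin n → ℝ) : ℝ :=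
  s - ∑ i : Fin n, sortedVec ℓ i * ((Fin.snoc (sortedVec x) s : Fin (n+1) → ℝ) i.succ - sortedVec x i)

/-- `S_{D,T}(x) = {y ∈ Dⁿ : T y ≤ T x}`. -/
def SsetD {n : ℕ} (D : Set ℝ) (T : (Fin n → ℝ) → ℝ) (x : Fin n → ℝ) : Set (Fin n → ℝ) :=
  {y | (∀ i, y i ∈ D) ∧ T y ≤ T x}

/-- `b_{D,T}(x, u) = sup_{z ∈ S_{D,T}(x)} m_{sup D}(z, u)`. -/
noncomputable def bfun {n : ℕ} (D : Set ℝ) (T : (Fin n → ℝ) → ℝ) (x u : Fin n → ℝ) : ℝ :=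
  sSup ((fun z => inducedMean (sSup D) z u) '' SsetD D T x)

/-- The uniform probability measure on `[0,1]`. -/
noncomputable def unif01 : Measure ℝ := volume.restrict (Icc (0:ℝ) 1)

/-- The law of an i.i.d. sample of size `n` from Uniform(0,1). -/
noncomputable def unifPi (n : ℕ) : Measure (Fin n → ℝ) := Measure.pi fun _ => unif01

/-- The `p`-quantile of the random variable `Y` under `μ`:
`Q(p, Y) = inf {y : P(Y ≤ y) ≥ p}`. -/
noncomputable def rquantile {Ω : Type*} [MeasurableSpace Ω] (μ : Measure Ω)
    (Y : Ω → ℝ) (p : ℝ) : ℝ :=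
  sInf {y : ℝ | ENNReal.ofReal p ≤ μ {ω | Y ω ≤ y}}

/-- The upper confidence bound `b^α_{D,T}(x) = Q(1 - α, b_{D,T}(x, U))`, `U` i.i.d. Uniform(0,1). -/
noncomputable def ucb {n : ℕ} (D : Set ℝ) (T : (Fin n → ℝ) → ℝ) (α : ℝ)
    (x : Fin n → ℝ) : ℝ :=
  rquantile (unifPi n) (bfun D T x) (1 - α)

/-- The stairstep function `G_{x,ℓ}` with top value at `s`. -/
noncomputable def stairstep {n : ℕ} (s : ℝ) (x ℓ : Fin n → ℝ) (t : ℝ) : ℝ :=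
  if s ≤ t then 1 else sSup ({0} ∪ (sortedVec ℓ '' {i | sortedVec x i ≤ t}))

/-- The `k`-th smallest value (1-indexed) among `m 0, …, m (L-1)`. -/
noncomputable def kthSmallest {L : ℕ} (m : Fin L → ℝ) (k : ℕ) : ℝ :=
  sInf {y : ℝ | k ≤ Nat.card {j : Fin L // m j ≤ y}}

section OrderStatistics

variable {n : ℕ}

lemma sortedVec_mem_of_forall {x : Fin n → ℝ} {s : Set ℝ} (h : ∀ j, x j ∈ s) (i : Fin n) :
    sortedVec x i ∈ s :=
  h _

lemma sortedVec_comp_of_monotone {f : ℝ → ℝ} (hf : Monotone f) (x : Fin n → ℝ) :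
    sortedVec (f ∘ x) = f ∘ sortedVec x :=
  ((Tuple.comp_sort_eq_comp_iff_monotone).2 (hf.comp (Tuple.monotone_sort x))).symm

lemma sortedVec_le_snoc_succ {x : Fin n → ℝ} {s : ℝ} (hx : ∀ j, x j ≤ s) (i : Fin n) :
    sortedVec x i ≤ (Fin.snoc (sortedVec x) s : Fin (n + 1) → ℝ) i.succ := by
  rcases Fin.eq_castSucc_or_eq_last i.succ with ⟨j, hj⟩ | hlast
  · rw [hj, Fin.snoc_castSucc]
    have hij : (i : ℕ) + 1 = j := by simpa using congrArg Fin.val hj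
    exact Tuple.monotone_sort x (Fin.le_def.2 (by omega))
  · rw [hlast, Fin.snoc_last]
    exact sortedVec_mem_of_forall (s := Iic s) hx i

end OrderStatistics

section InducedMean

variable {n : ℕ} {s : ℝ}

lemma inducedMean_antitone_weights {z u v : Fin n → ℝ} (hz : ∀ i, z i ≤ s)
    (huv : ∀ i, sortedVec u i ≤ sortedVec v i) :
    inducedMean s z v ≤ inducedMean s z u :=
  sub_le_sub_left (Finset.sum_le_sum fun i _ =>
    mul_le_mul_of_nonneg_right (huv i) (sub_nonneg.2 (sortedVec_le_snoc_succ hz i))) s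

lemma inducedMean_le {z u : Fin n → ℝ} (hz : ∀ i, z i ≤ s) (hu : ∀ i, 0 ≤ u i) :
    inducedMean s z u ≤ s :=
  sub_le_self s (Finset.sum_nonneg fun i _ =>
    mul_nonneg (sortedVec_mem_of_forall (s := Ici 0) hu i)
      (sub_nonneg.2 (sortedVec_le_snoc_succ hz i)))

lemma inducedMean_le_bfun (T : (Fin n → ℝ) → ℝ) {x u : Fin n → ℝ} (hx : ∀ i, x i ≤ s)
    (hu : ∀ i, 0 ≤ u i) : inducedMean s x u ≤ bfun (Iic s) T x u := by
  rw [bfun, csSup_Iic]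
  refine le_csSup ⟨s, ?_⟩ ⟨x, ⟨hx, le_rfl⟩, rfl⟩
  rintro _ ⟨z, ⟨hz, -⟩, rfl⟩
  exact inducedMean_le hz hu

lemma bfun_le_inducedMean {ℓ x u : Fin n → ℝ} (hx : ∀ i, x i ≤ s)
    (hℓu : ∀ i, sortedVec ℓ i ≤ sortedVec u i) :
    bfun (Iic s) (fun y => inducedMean s y ℓ) x u ≤ inducedMean s x ℓ := by
  rw [bfun, csSup_Iic]
  refine csSup_le ⟨_, x, ⟨hx, le_rfl⟩, rfl⟩ ?_
  rintro _ ⟨z, ⟨hz, hzx⟩, rfl⟩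
  exact (inducedMean_antitone_weights hz hℓu).trans hzx

lemma sortedVec_le_stairstep {ℓ : Fin n → ℝ} (hℓ : ∀ i, ℓ i ≤ 1) (x : Fin n → ℝ) (i : Fin n) :
    sortedVec ℓ i ≤ stairstep s x ℓ (sortedVec x i) := by
  unfold stairstep
  split_ifs
  · exact sortedVec_mem_of_forall (s := Iic 1) hℓ i
  · exact le_csSup (Set.toFinite _).bddAbove (Or.inr ⟨i, le_refl (sortedVec x i), rfl⟩)

end InducedMean

instance : IsProbabilityMeasure unif01 :=
  ⟨by simp [unif01, Real.volume_Icc]⟩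

instance (n : ℕ) : IsProbabilityMeasure (unifPi n) := by
  unfold unifPi; infer_instance

lemma unif01_Iic {t : ℝ} (ht : t ∈ Icc (0 : ℝ) 1) : unif01 (Iic t) = ENNReal.ofReal t := by
  have hIcc : Iic t ∩ Icc 0 1 = Icc 0 t :=
    Set.ext fun _ => ⟨fun h => ⟨h.2.1, h.1⟩, fun h => ⟨h.2, h.1, h.2.trans ht.2⟩⟩
  rw [unif01, Measure.restrict_apply measurableSet_Iic, hIcc, Real.volume_Icc, sub_zero]

lemma ae_mem_unitBox (n : ℕ) : ∀ᵐ u ∂unifPi n, ∀ i, u i ∈ Icc (0 : ℝ) 1 :=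
  ae_all_iff.2 fun _ => Measure.tendsto_eval_ae_ae.eventually (ae_restrict_mem measurableSet_Icc)

section ShiftedUniform

variable (c : ℝ)

instance : IsProbabilityMeasure (unif01.map (c + ·)) :=
  Measure.isProbabilityMeasure_map (measurable_const_add c).aemeasurable

lemma ae_le_map_const_add_unif01 : ∀ᵐ t ∂unif01.map (c + ·), t ≤ c + 1 :=
  (ae_map_iff (measurable_const_add c).aemeasurable measurableSet_Iic).2 <|
    (ae_restrict_mem measurableSet_Icc).mono fun _ ht => add_le_add_right ht.2 c

lemma map_const_add_unif01_Iic {t : ℝ} (ht : t ∈ Icc (0 : ℝ) 1) :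
    unif01.map (c + ·) (Iic (c + t)) = ENNReal.ofReal t := by
  rw [Measure.map_apply (measurable_const_add c) measurableSet_Iic, ← unif01_Iic ht]
  congr 1
  ext; simp

lemma pi_map_const_add_unif01_apply {n : ℕ} (E : Set (Fin n → ℝ)) :
    Measure.pi (fun _ => unif01.map (c + ·)) E = unifPi n ((fun u i => c + u i) ⁻¹' E) := by
  have hshift : MeasurableEmbedding fun (u : Fin n → ℝ) i => c + u i :=
    (MeasurableEquiv.addLeft (fun _ => c)).measurableEmbedding
  rw [← Measure.pi_map_pi fun _ => (measurable_const_add c).aemeasurable, hshift.map_apply]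
  rfl

end ShiftedUniform

lemma rquantile_le {Ω : Type*} [MeasurableSpace Ω] {μ : Measure Ω} {Y : Ω → ℝ} {p c y : ℝ}
    (hp : 0 < p) (hY : ∀ᵐ ω ∂μ, c ≤ Y ω) (hy : ENNReal.ofReal p ≤ μ {ω | Y ω ≤ y}) :
    rquantile μ Y p ≤ y := by
  refine csInf_le ⟨c, fun y' hy' => ?_⟩ hy
  by_contra! hlt
  have hbelow : μ {ω | ¬ c ≤ Y ω} = 0 := ae_iff.1 hY
  have hnull : μ {ω | Y ω ≤ y'} = 0 :=
    measure_mono_null (fun ω hω => not_le.2 (lt_of_le_of_lt hω hlt)) hbelow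
  have hp0 : ENNReal.ofReal p ≤ 0 := hnull ▸ hy'
  exact (ENNReal.ofReal_pos.2 hp).not_ge hp0

lemma sortedVec_le_of_stairstep_le_cdf {n : ℕ} {s c : ℝ} {ℓ u : Fin n → ℝ} (hℓ : ∀ i, ℓ i ≤ 1)
    (hu : ∀ i, u i ∈ Icc (0 : ℝ) 1)
    (hG : ∀ t, stairstep s (fun i => c + u i) ℓ t ≤ (unif01.map (c + ·) (Iic t)).toReal)
    (i : Fin n) : sortedVec ℓ i ≤ sortedVec u i := by
  have hshift : sortedVec (fun i => c + u i) i = c + sortedVec u i :=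
    congrFun (sortedVec_comp_of_monotone (f := (c + ·)) (monotone_id.const_add c) u) i
  have hui := sortedVec_mem_of_forall hu i
  calc sortedVec ℓ i ≤ stairstep s (fun i => c + u i) ℓ (sortedVec (fun i => c + u i) i) :=
        sortedVec_le_stairstep hℓ _ i
    _ ≤ _ := hG _
    _ = sortedVec u i := by
        rw [hshift, map_const_add_unif01_Iic c hui, ENNReal.toReal_ofReal hui.1]

theorem stmt11_general {n : ℕ} (b : ℝ) (D : Set ℝ) (hsub : D ⊆ Set.Iic b)
    (ℓ : Fin n → ℝ) (hℓ : ∀ i, ℓ i ∈ Set.Icc (0:ℝ) 1)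
    (α : ℝ) (hα : α ∈ Set.Ioo (0:ℝ) 1)
    (hlcb : ∀ (ν : Measure ℝ) [IsProbabilityMeasure ν], (∀ᵐ t ∂ν, t ≤ b) →
      ENNReal.ofReal (1 - α)
        ≤ (Measure.pi fun _ : Fin n => ν)
            {x | ∀ t : ℝ, stairstep b x ℓ t ≤ (ν (Set.Iic t)).toReal}) :
    ∀ x : Fin n → ℝ, (∀ i, x i ∈ D) →
      ucb (Set.Iic b) (fun y => inducedMean b y ℓ) α x ≤ inducedMean b x ℓ := by
  intro x hxD
  have hx : ∀ i, x i ≤ b := fun i => hsub (hxD i)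
  have hν : ∀ᵐ t ∂unif01.map (b - 1 + ·), t ≤ b := by
    simpa using ae_le_map_const_add_unif01 (b - 1)
  refine rquantile_le (c := inducedMean b x 1) (sub_pos.2 hα.2) ?_ ?_
  · filter_upwards [ae_mem_unitBox n] with u hu
    exact (inducedMean_antitone_weights hx fun i => (sortedVec_mem_of_forall hu i).2).trans
      (inducedMean_le_bfun _ hx fun i => (hu i).1)
  · calc ENNReal.ofReal (1 - α) ≤ _ := hlcb _ hν
      _ = _ := pi_map_const_add_unif01_apply (b - 1) _
      _ ≤ _ := measure_mono_ae <| by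
        filter_upwards [ae_mem_unitBox n] with u hu hG
        exact bfun_le_inducedMean hx
          (sortedVec_le_of_stairstep_le_cdf (fun i => (hℓ i).2) hu hG)

/-- Comparison with Anderson's bound: if `G_{X,ℓ}` is an exact
`(1-α)` lower confidence bound for the CDF on `D⁺ = (-∞, b]`, then for every
sample `x ∈ Dⁿ` (`D ⊆ D⁺`), using `T(y) = m_{D⁺}(y, ℓ)`, our bound is at most
Anderson's bound `b^{α,Anderson}_ℓ(x) = m_{D⁺}(x, ℓ)`. -/
theorem stmt11 {n : ℕ} (b : ℝ) (D : Set ℝ) (hD : D.Nonempty) (hsub : D ⊆ Set.Iic b)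
    (ℓ : Fin n → ℝ) (hℓ : ∀ i, ℓ i ∈ Set.Icc (0:ℝ) 1)
    (α : ℝ) (hα : α ∈ Set.Ioo (0:ℝ) 1)
    (hlcb : ∀ (ν : Measure ℝ) [IsProbabilityMeasure ν], (∀ᵐ t ∂ν, t ≤ b) →
      ENNReal.ofReal (1 - α)
        ≤ (Measure.pi fun _ : Fin n => ν)
            {x | ∀ t : ℝ, stairstep b x ℓ t ≤ (ν (Set.Iic t)).toReal})
    (hexact : ∃ (ν : Measure ℝ) (_ : IsProbabilityMeasure ν), (∀ᵐ t ∂ν, t ≤ b) ∧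
      (Measure.pi fun _ : Fin n => ν)
          {x | ∀ t : ℝ, stairstep b x ℓ t ≤ (ν (Set.Iic t)).toReal}
        = ENNReal.ofReal (1 - α)) :
    ∀ x : Fin n → ℝ, (∀ i, x i ∈ D) →
      ucb (Set.Iic b) (fun y => inducedMean b y ℓ) α x ≤ inducedMean b x ℓ :=
  stmt11_general b D hsub ℓ hℓ α hα hlcb
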